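/- arXiv:1604.08733 — 3 statements merged into one kernel-verified Lean document; each statement's English description precedes it below -/
import Mathlib

section
/- Let D be a strongly connected balanced bipartite digraph of order 2a ≥ 8 with partite sets X and Y. If max{d(x), d(y)} ≥ 2a − 2 for every dominating pair of vertices {x, y}, then D contains a perfect matching from X to Y. -/
/-!
By Hall's theorem it suffices that every `S ⊆ X` has at least `|S|` out-neighbours. Suppose
the set `T` of out-neighbours of `S` has `|T| < |S|`. By strong connectivity every vertex has
an out-neighbour, so two vertices of `S` share one; the dominating-pair condition gives `w ∈ S`
with `2a - 2 ≤ d(w) ≤ |T| + a`, hence `|T| ≥ a - 2`. Every vertex of `Y` has an in-neighbour,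
so `S ≠ X`; thus `|S| = a - 1`, `|T| = a - 2`, and `d(w) = 2a - 2` forces all of `Y` into the
in-neighbourhood of `w`. The two vertices of `Y \ T` then form a dominating pair, yet each has
in-neighbours only in the single vertex of `X \ S`, so its degree is at most `a + 1 < 2a - 2`.
-/

open Finset

variable {V : Type*}

/-- Total degree (out-degree plus in-degree) of `x` in the digraph with arc relation `A`. -/
noncomputable def deg (A : V → V → Prop) (x : V) : ℕ :=
  Set.ncard {y | A x y} + Set.ncard {y | A y x}

/-- The digraph with arc relation `A` is strongly connected. -/
def StrongConn (A : V → V → Prop) : Prop :=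
  ∀ u v : V, Relation.ReflTransGen A u v

/-- `{x, y}` is a dominating pair: distinct vertices with a common out-neighbour. -/
def DomPair (A : V → V → Prop) (x y : V) : Prop :=
  x ≠ y ∧ ∃ z, A x z ∧ A y z

/-- `X, Y` is a bipartition of the digraph `A`: the two parts partition the vertex
set and every arc joins the two parts. -/
def IsBipartition (A : V → V → Prop) (X Y : Set V) : Prop :=
  Disjoint X Y ∧ X ∪ Y = Set.univ ∧
    ∀ u v, A u v → (u ∈ X ∧ v ∈ Y) ∨ (u ∈ Y ∧ v ∈ X)

/-- A perfect matching from `X` to `Y`: pairwise vertex-disjoint arcs, one leaving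
each vertex of `X`, all ending in `Y`. -/
def PerfectMatchingFromTo (A : V → V → Prop) (X Y : Set V) : Prop :=
  ∃ f : V → V, Set.InjOn f X ∧ ∀ x ∈ X, A x (f x) ∧ f x ∈ Y

variable {A : V → V → Prop} {X Y S : Set V} {u v : V}

def outNbhd (A : V → V → Prop) (S : Set V) : Set V :=
  {y | ∃ x ∈ S, A x y}

theorem subset_outNbhd (hv : v ∈ S) : {y | A v y} ⊆ outNbhd A S :=
  fun _ hy => ⟨v, hv, hy⟩

theorem exists_injOn_of_forall_ncard_le_ncard_outNbhd [Finite V]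
    (h : ∀ S ⊆ X, S.ncard ≤ (outNbhd A S).ncard) :
    ∃ f : V → V, X.InjOn f ∧ ∀ x ∈ X, A x (f x) := by
  classical
  have := Fintype.ofFinite V
  have hall (s : Finset X) : #s ≤ #{y | ∃ x ∈ s, A x y} := by
    have hs := h (Subtype.val '' (s : Set X)) (by simp)
    rw [Set.ncard_image_of_injective _ Subtype.val_injective, Set.ncard_coe_finset] at hs
    convert hs using 1
    rw [← Set.ncard_coe_finset]
    congr 1
    ext y
    simp [outNbhd]
  obtain ⟨g, hg, hgA⟩ :=
    (Fintype.all_card_le_filter_rel_iff_exists_injective (fun (x : X) y => A x y)).mp hall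
  refine ⟨fun v => if hv : v ∈ X then g ⟨v, hv⟩ else v, fun x hx y hy hxy => ?_, fun x hx => ?_⟩
  · simp only [dif_pos hx, dif_pos hy] at hxy
    exact congrArg Subtype.val (hg hxy)
  · simpa [dif_pos hx] using hgA ⟨x, hx⟩

theorem deg_le_ncard_add [Finite V] {s t : Set V} (hout : {w | A v w} ⊆ s)
    (hin : {w | A w v} ⊆ t) : deg A v ≤ s.ncard + t.ncard :=
  Nat.add_le_add (Set.ncard_le_ncard hout) (Set.ncard_le_ncard hin)

theorem exists_domPair_of_ncard_outNbhd_lt [Finite V] (hout : ∀ v ∈ S, ∃ w, A v w)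
    (h : (outNbhd A S).ncard < S.ncard) : ∃ x ∈ S, ∃ y ∈ S, DomPair A x y := by
  choose! f hf using hout
  obtain ⟨x, hx, y, hy, hne, hxy⟩ :=
    Set.exists_ne_map_eq_of_ncard_lt_of_maps_to h fun v hv => ⟨v, hv, hf v hv⟩
  exact ⟨x, hx, y, hy, hne, f x, hf x hx, hxy ▸ hf y hy⟩

theorem exists_mem_le_deg_of_domPair {k : ℕ}
    (hdeg : ∀ x y : V, DomPair A x y → k ≤ max (deg A x) (deg A y))
    (hS : ∃ x ∈ S, ∃ y ∈ S, DomPair A x y) : ∃ v ∈ S, k ≤ deg A v := by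
  obtain ⟨x, hx, y, hy, hxy⟩ := hS
  rcases le_max_iff.mp (hdeg x y hxy) with h | h
  exacts [⟨x, hx, h⟩, ⟨y, hy, h⟩]

namespace StrongConn

theorem exists_arc_from [Nontrivial V] (h : StrongConn A) (v : V) : ∃ w, A v w := by
  obtain ⟨w, hw⟩ := exists_ne v
  rcases (h v w).cases_head with rfl | ⟨c, hc, -⟩
  exacts [absurd rfl hw, ⟨c, hc⟩]

theorem exists_arc_to [Nontrivial V] (h : StrongConn A) (v : V) : ∃ u, A u v := by
  obtain ⟨w, hw⟩ := exists_ne v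
  rcases (h w v).cases_tail with rfl | ⟨c, -, hc⟩
  exacts [absurd rfl hw, ⟨c, hc⟩]

end StrongConn

namespace IsBipartition

theorem symm (h : IsBipartition A X Y) : IsBipartition A Y X :=
  ⟨h.1.symm, Set.union_comm X Y ▸ h.2.1, fun u v huv => (h.2.2 u v huv).symm⟩

theorem head_mem (h : IsBipartition A X Y) (huv : A u v) (hu : u ∈ X) : v ∈ Y :=
  (h.2.2 u v huv).elim And.right fun h' => absurd h'.1 (h.1.notMem_of_mem_left hu)

theorem tail_mem (h : IsBipartition A X Y) (huv : A u v) (hv : v ∈ X) : u ∈ Y :=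
  (h.2.2 u v huv).elim (fun h' => absurd h'.2 (h.1.notMem_of_mem_left hv)) And.left

theorem outNbhd_subset (h : IsBipartition A X Y) (hS : S ⊆ X) : outNbhd A S ⊆ Y :=
  fun _ ⟨_, hx, hxy⟩ => h.head_mem hxy (hS hx)

theorem outNbhd_eq (h : IsBipartition A X Y) (hin : ∀ v, ∃ u, A u v) : outNbhd A X = Y := by
  refine (h.outNbhd_subset subset_rfl).antisymm fun y hy => ?_
  obtain ⟨x, hxy⟩ := hin y
  exact ⟨x, h.symm.tail_mem hxy hy, hxy⟩

/-- A vertex of `Y` outside `N⁺(S)` can only be entered from `X \ S`. -/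
theorem deg_le_of_notMem_outNbhd [Finite V] (h : IsBipartition A X Y) {y : V} (hy : y ∈ Y)
    (hyS : y ∉ outNbhd A S) : deg A y ≤ X.ncard + (X \ S).ncard :=
  deg_le_ncard_add (fun _ hw => h.symm.head_mem hw hy)
    fun x hx => ⟨h.symm.tail_mem hx hy, fun hxS => hyS ⟨x, hxS, hx⟩⟩

theorem ncard_le_ncard_outNbhd [Finite V] {a : ℕ} (h : IsBipartition A X Y) (ha : 4 ≤ a)
    (hX : X.ncard = a) (hY : Y.ncard = a) (hout : ∀ v, ∃ w, A v w) (hin : ∀ v, ∃ u, A u v)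
    (hdeg : ∀ x y : V, DomPair A x y → 2 * a - 2 ≤ max (deg A x) (deg A y)) (hSX : S ⊆ X) :
    S.ncard ≤ (outNbhd A S).ncard := by
  by_contra! hlt
  have hinY : ∀ {v}, v ∈ X → {u | A u v} ⊆ Y := fun hv _ hu => h.tail_mem hu hv
  obtain ⟨w, hwS, hw⟩ :=
    exists_mem_le_deg_of_domPair hdeg (exists_domPair_of_ncard_outNbhd_lt (fun v _ => hout v) hlt)
  have hw_le : deg A w ≤ (outNbhd A S).ncard + a :=
    hY ▸ deg_le_ncard_add (subset_outNbhd hwS) (hinY (hSX hwS))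
  have hS_lt : S.ncard < a := by
    refine hX ▸ Set.ncard_lt_ncard (hSX.ssubset_of_ne ?_)
    rintro rfl
    rw [h.outNbhd_eq hin] at hlt
    omega
  have hYw : ∀ y ∈ Y, A y w := by
    refine (Set.eq_of_subset_of_ncard_le (hinY (hSX hwS)) ?_).ge
    have := Set.ncard_le_ncard (subset_outNbhd (A := A) hwS)
    unfold deg at hw
    omega
  obtain ⟨r, r', hr, hr', hrr'⟩ : ∃ r r', r ∈ Y \ outNbhd A S ∧ r' ∈ Y \ outNbhd A S ∧ r ≠ r' := by
    rw [← Set.one_lt_ncard_iff, Set.ncard_sdiff (h.outNbhd_subset hSX)]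
    omega
  obtain ⟨ρ, hρ, hρ_ge⟩ :=
    exists_mem_le_deg_of_domPair hdeg ⟨r, hr, r', hr', hrr', w, hYw r hr.1, hYw r' hr'.1⟩
  have hρ_le := h.deg_le_of_notMem_outNbhd hρ.1 hρ.2
  rw [Set.ncard_sdiff hSX, hX] at hρ_le
  omega

end IsBipartition

/-- If `D` is a strongly connected balanced bipartite digraph of order `2a ≥ 8` and
`max {d(x), d(y)} ≥ 2a − 2` for every dominating pair `{x, y}`, then `D` contains a
perfect matching from `X` to `Y`. -/
theorem stmt2 [Fintype V] (A : V → V → Prop) (X Y : Set V) (a : ℕ) (ha : 4 ≤ a)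
    (hX : X.ncard = a) (hY : Y.ncard = a) (hbip : IsBipartition A X Y)
    (hstrong : StrongConn A)
    (hdeg : ∀ x y : V, DomPair A x y → 2 * a - 2 ≤ max (deg A x) (deg A y)) :
    PerfectMatchingFromTo A X Y := by
  have : Nontrivial V :=
    Set.nontrivial_of_nontrivial (s := X) (Set.one_lt_ncard_iff_nontrivial.mp (by omega))
  obtain ⟨f, hf, hfA⟩ := exists_injOn_of_forall_ncard_le_ncard_outNbhd fun S hS =>
    hbip.ncard_le_ncard_outNbhd ha hX hY hstrong.exists_arc_from hstrong.exists_arc_to hdeg hS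
  exact ⟨f, hf, fun x hx => ⟨hfA x hx, hbip.head_mem (hfA x hx) hx⟩⟩
end

section
/- Let D be a strongly connected balanced bipartite digraph of order 2a with a ≥ 5. Suppose that for every dominating pair of vertices {x, y}, either d(x) ≥ 2a − 1 and d(y) ≥ a + 1, or d(y) ≥ 2a − 1 and d(x) ≥ a + 1. Then D is hamiltonian. -/
open Finset

variable {V : Type*}

/-- The digraph `A` has a hamiltonian (directed) cycle. -/
def Hamiltonian [Fintype V] (A : V → V → Prop) : Prop :=
  ∃ f : ZMod (Fintype.card V) → V, Function.Bijective f ∧ ∀ i, A (f i) (f (i + 1))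

/-!
Take a cycle factor `F` (a permutation with `v → F v` for every `v`; one exists by Hall's
theorem) with the largest number of pairs of vertices on a common cycle. Then no exchange
`u ↦ F w`, `w ↦ F u` between two different cycles is possible, since `F * swap u w` would merge
them, and it suffices to show that a cycle factor without such exchanges is a single cycle.

Call a vertex heavy if its degree is at least `2a - 1`: it misses at most one of its `2a`
possible arcs, and two light vertices never have a common out-neighbour. For a vertex `w`, the
vertices `u` off its cycle with `u → F w` and those with `w → F u` are disjoint, which bounds the
arcs between a cycle and the rest.

On a cycle of light vertices, an arc `p → t` leaving the cycle would make all `F⁻²ᵏ t` heavy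
out-neighbours of `p` and all `F⁻²ᵏ⁻¹ t` heavy non-in-neighbours of `F p`; an in-neighbour
`z ≠ p` of `F p` can then be exchanged with one of the latter, putting `z` on their cycle, which
is absurd. The degree condition provides such a `z` all around the cycle, so no arc leaves it,
contradicting strong connectivity. Otherwise some heavy `x` has a heavy successor; then the cycle
through `x` misses at most two vertices of each part, so any other cycle has length `2` or `4`,
and a heavy vertex on it leaves some vertex of that cycle, lying in a dominating pair, with
degree below `a + 1`.
-/

namespace Equiv.Perm

variable {F : Perm V}

theorem apply_mem_iff_of_apply_four [DecidableEq V] {w : V} (h4 : F (F (F (F w))) = w) (v : V) :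
    F v ∈ ({w, F w, F (F w), F (F (F w))} : Finset V) ↔
      v ∈ ({w, F w, F (F w), F (F (F w))} : Finset V) := by
  have : F.symm w = F (F (F w)) := F.symm_apply_eq.2 h4.symm
  simp only [Finset.mem_insert, Finset.mem_singleton, ← F.eq_symm_apply,
    F.symm_apply_apply, this]
  tauto

variable [Fintype V]

theorem SameCycle.of_forall_symm_apply {S : V → Prop} (hS : ∀ v, S v → S (F.symm v))
    {x y : V} (hx : S x) (h : F.SameCycle x y) : S y := by
  obtain ⟨i, rfl⟩ := (sameCycle_inv.mpr h).exists_nat_pow_eq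
  clear h
  induction i with
  | zero => simpa
  | succ i ih => rw [pow_succ', mul_apply]; exact hS _ ih

theorem SameCycle.mem_of_apply_mem_iff [DecidableEq V] {D : Finset V}
    (hD : ∀ v, F v ∈ D ↔ v ∈ D) {w u : V} (h : F.SameCycle w u) (hw : w ∈ D) : u ∈ D :=
  h.of_forall_symm_apply (fun v hv => (hD _).1 (by simpa using hv)) hw

variable [DecidableEq V] {u u' : V}

theorem sameCycle_mul_swap (h : ¬F.SameCycle u u') : (F * swap u u').SameCycle u u' := by
  by_contra hG
  have key : ∀ k, (F * swap u u').SameCycle u ((F ^ (k + 1)) u') := by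
    intro k
    induction k with
    | zero => simpa using (sameCycle_apply_right (f := F * swap u u')).2 (.refl _ u)
    | succ k ih =>
      have hu' : (F ^ (k + 1)) u' ≠ u' := fun he => hG (by rwa [he] at ih)
      have hu : (F ^ (k + 1)) u' ≠ u := by
        intro he
        have : F.SameCycle u' ((F ^ (k + 1)) u') := ⟨((k + 1 : ℕ) : ℤ), by rw [zpow_natCast]⟩
        exact h (he ▸ this).symm
      rw [pow_succ', mul_apply, ← swap_apply_of_ne_of_ne hu hu', ← mul_apply]
      exact sameCycle_apply_right.2 ih
  have := key (orderOf F - 1)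
  rw [Nat.sub_add_cancel (orderOf_pos F), pow_orderOf_eq_one] at this
  exact hG this

theorem sameCycle_mul_swap_apply (h : ¬F.SameCycle u u') (v : V) :
    (F * swap u u').SameCycle v (F v) := by
  have hG := sameCycle_mul_swap h
  by_cases hv : v = u
  · subst hv
    have : (F * swap v u') u' = F v := by simp
    exact hG.trans (this ▸ sameCycle_apply_right.2 (.refl _ _))
  by_cases hv' : v = u'
  · subst hv'
    have : (F * swap u v) u = F v := by simp
    exact hG.symm.trans (this ▸ sameCycle_apply_right.2 (.refl _ _))
  · have : (F * swap u u') v = F v := by simp [swap_apply_of_ne_of_ne hv hv']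
    exact this ▸ sameCycle_apply_right.2 (.refl _ _)

theorem SameCycle.mul_swap (h : ¬F.SameCycle u u') {v w : V} (hvw : F.SameCycle v w) :
    (F * swap u u').SameCycle v w := by
  obtain ⟨i, rfl⟩ := hvw.exists_nat_pow_eq
  clear hvw
  induction i with
  | zero => exact .refl _ _
  | succ i ih => rw [pow_succ', mul_apply]; exact ih.trans (sameCycle_mul_swap_apply h _)

def sameCyclePairs (F : Perm V) : Finset (V × V) := {p | F.SameCycle p.1 p.2}

theorem card_sameCyclePairs_lt_mul_swap (h : ¬F.SameCycle u u') :
    #F.sameCyclePairs < #(F * swap u u').sameCyclePairs := by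
  refine card_lt_card ⟨fun p hp => ?_, fun hsub => h ?_⟩
  · simp only [sameCyclePairs, mem_filter, mem_univ, true_and] at hp ⊢
    exact hp.mul_swap h
  · have := hsub (show (u, u') ∈ (F * swap u u').sameCyclePairs by
      simp [sameCyclePairs, sameCycle_mul_swap h])
    simpa [sameCyclePairs] using this

end Equiv.Perm

open Equiv Perm

theorem hamiltonian_of_forall_sameCycle [Fintype V] [DecidableEq V] {A : V → V → Prop}
    {F : Perm V} (hA : ∀ v, A v (F v)) (hF : ∀ v, F v ≠ v) (hc : ∀ u v, F.SameCycle u v)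
    (v₀ : V) : Hamiltonian A := by
  have hsupp : (F.cycleOf v₀).support = univ :=
    eq_univ_of_forall fun v => mem_support_cycleOf_iff.2 ⟨hc v₀ v, mem_support.2 (hF v₀)⟩
  have hcard : #(F.cycleOf v₀).support = Fintype.card V := by rw [hsupp, card_univ]
  have : Nonempty V := ⟨v₀⟩
  have : NeZero (Fintype.card V) := ⟨Fintype.card_ne_zero⟩
  refine ⟨fun i => (F ^ i.val) v₀, ?_, fun i => ?_⟩
  · rw [Fintype.bijective_iff_surjective_and_card, ZMod.card]
    refine ⟨fun v => ?_, rfl⟩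
    obtain ⟨i, hi, rfl⟩ := (hc v₀ v).exists_pow_eq_of_mem_support (mem_support.2 (hF v₀))
    exact ⟨i, by dsimp only; rw [ZMod.val_natCast_of_lt (hcard ▸ hi)]⟩
  · dsimp only
    have hmod := pow_mod_card_support_cycleOf_self_apply F (i.val + 1) v₀
    rw [hcard] at hmod
    rw [ZMod.val_add, ZMod.val_one_eq_one_mod, Nat.add_mod_mod, hmod, pow_succ', mul_apply]
    exact hA _

theorem StrongConn.exists_adj {A : V → V → Prop} (hA : StrongConn A) {S : V → Prop} {u v : V}
    (hu : S u) (hv : ¬S v) : ∃ x y, S x ∧ ¬S y ∧ A x y := by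
  suffices ∀ w, Relation.ReflTransGen A u w → S w ∨ ∃ x y, S x ∧ ¬S y ∧ A x y from
    (this v (hA u v)).resolve_left hv
  intro w h
  induction h with
  | refl => exact .inl hu
  | @tail y z _ hyz ih =>
    by_cases hz : S z
    · exact .inl hz
    · exact ih.elim (fun hy => .inr ⟨y, z, hy, hz, hyz⟩) .inr

theorem Finset.card_le_card_sdiff_add_card_of_inter_subset [DecidableEq V] {s D T : Finset V}
    (h : s ∩ D ⊆ T) : #s ≤ #(s \ D) + #T :=
  (card_sdiff_add_card_inter s D).symm.le.trans (Nat.add_le_add_left (card_le_card h) _)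

theorem Finset.card_le_card_sdiff_add_card_inter_sub_one [DecidableEq V] {s P D : Finset V}
    {u : V} (hs : s ⊆ P) (hu : u ∈ P ∩ D) (hus : u ∉ s) : #s ≤ #(s \ D) + (#(P ∩ D) - 1) := by
  rw [← card_erase_of_mem hu]
  exact card_le_card_sdiff_add_card_of_inter_subset fun x hx =>
    mem_erase.2 ⟨fun h => hus (h ▸ (mem_inter.1 hx).1), inter_subset_inter_right hs hx⟩

open scoped Classical

section Bipartite

variable [Fintype V]

noncomputable def outNbrs (A : V → V → Prop) (v : V) : Finset V := {w | A v w}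

noncomputable def inNbrs (A : V → V → Prop) (v : V) : Finset V := {w | A w v}

/-- The part of the bipartition `X, Xᶜ` not containing `v`. -/
noncomputable def oppPart (X : Finset V) (v : V) : Finset V := {w | w ∈ X ↔ v ∉ X}

structure IsBalancedBipartite (A : V → V → Prop) (X : Finset V) (a : ℕ) : Prop where
  card_eq : #X = a
  card_compl_eq : #Xᶜ = a
  mem_iff_not_mem_of_adj : ∀ {u v}, A u v → (u ∈ X ↔ v ∉ X)

variable {A : V → V → Prop} {X : Finset V} {a : ℕ} {u v w : V}

@[simp] theorem mem_outNbrs : w ∈ outNbrs A v ↔ A v w := by simp [outNbrs]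

@[simp] theorem mem_inNbrs : w ∈ inNbrs A v ↔ A w v := by simp [inNbrs]

theorem mem_oppPart : w ∈ oppPart X v ↔ (w ∈ X ↔ v ∉ X) := by simp [oppPart]

theorem deg_eq_card_add_card (A : V → V → Prop) (v : V) :
    deg A v = #(outNbrs A v) + #(inNbrs A v) := by
  rw [deg, ← Set.ncard_coe_finset, ← Set.ncard_coe_finset]
  simp [outNbrs, inNbrs]

theorem IsBipartition.isBalancedBipartite {X Y : Set V} (h : IsBipartition A X Y)
    (hX : X.ncard = a) (hY : Y.ncard = a) : IsBalancedBipartite A {v | v ∈ X} a := by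
  obtain ⟨hdisj, huniv, hcross⟩ := h
  have hXY : ∀ v, v ∉ X ↔ v ∈ Y := fun v => by
    have : v ∈ X → v ∉ Y := fun h => Set.disjoint_left.1 hdisj h
    have : v ∈ X ∪ Y := by rw [huniv]; trivial
    rcases this with h | h <;> tauto
  refine ⟨?_, ?_, fun {u v} huv => ?_⟩
  · rw [← hX, ← Set.ncard_coe_finset]; congr; ext; simp
  · rw [← hY, ← Set.ncard_coe_finset]; congr; ext; simp [hXY]
  · have := hXY u; have := hXY v; simp only [mem_filter, mem_univ, true_and]
    rcases hcross u v huv with h | h <;> tauto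

namespace IsBalancedBipartite

variable (hB : IsBalancedBipartite A X a)
include hB

theorem compl : IsBalancedBipartite A Xᶜ a :=
  ⟨hB.card_compl_eq, by rw [compl_compl, hB.card_eq], fun h => by
    have := hB.mem_iff_not_mem_of_adj h; simp only [mem_compl]; tauto⟩

theorem card_oppPart (v : V) : #(oppPart X v) = a := by
  by_cases hv : v ∈ X
  · rw [← hB.card_compl_eq]; congr 1; ext w; simp [mem_oppPart, hv]
  · rw [← hB.card_eq]; congr 1; ext w; simp [mem_oppPart, hv]

theorem mem_oppPart_of_adj (h : A u v) : v ∈ oppPart X u := by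
  rw [mem_oppPart]; have := hB.mem_iff_not_mem_of_adj h; tauto

theorem mem_oppPart_of_adj' (h : A u v) : u ∈ oppPart X v := by
  rw [mem_oppPart]; have := hB.mem_iff_not_mem_of_adj h; tauto

theorem not_adj_self (v : V) : ¬A v v := fun h => by
  have := hB.mem_iff_not_mem_of_adj h; tauto

theorem not_adj_of_adj_of_adj (h₁ : A u v) (h₂ : A v w) : ¬A u w ∧ ¬A w u := by
  have := hB.mem_iff_not_mem_of_adj h₁
  have := hB.mem_iff_not_mem_of_adj h₂
  constructor <;> intro h <;> have := hB.mem_iff_not_mem_of_adj h <;> tauto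

theorem outNbrs_subset : outNbrs A v ⊆ oppPart X v :=
  fun _ hw => hB.mem_oppPart_of_adj (mem_outNbrs.1 hw)

theorem inNbrs_subset : inNbrs A v ⊆ oppPart X v :=
  fun _ hw => hB.mem_oppPart_of_adj' (mem_inNbrs.1 hw)

theorem card_outNbrs_le : #(outNbrs A v) ≤ a :=
  hB.card_oppPart v ▸ card_le_card hB.outNbrs_subset

theorem card_inNbrs_le : #(inNbrs A v) ≤ a :=
  hB.card_oppPart v ▸ card_le_card hB.inNbrs_subset

theorem outNbrs_nonempty (hS : StrongConn A) (ha : 1 ≤ a) (v : V) : (outNbrs A v).Nonempty := by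
  obtain ⟨w, hw⟩ := card_pos.1 (hB.card_oppPart v ▸ ha)
  obtain ⟨x, y, rfl, hy, hxy⟩ := hS.exists_adj (S := (· = v)) (v := w) rfl
    (fun h => by subst h; simp [mem_oppPart] at hw)
  exact ⟨y, mem_outNbrs.2 hxy⟩

theorem inNbrs_nonempty (hS : StrongConn A) (ha : 1 ≤ a) (v : V) : (inNbrs A v).Nonempty := by
  obtain ⟨w, hw⟩ := card_pos.1 (hB.card_oppPart v ▸ ha)
  obtain ⟨x, y, hx, hy, hxy⟩ := hS.exists_adj (S := (· ≠ v)) (u := w)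
    (fun h => by subst h; simp [mem_oppPart] at hw) (not_not.2 rfl)
  exact ⟨x, mem_inNbrs.2 (not_not.1 hy ▸ hxy)⟩

theorem card_oppPart_inter_eq_two {x₁ y₁ x₂ y₂ : V} (a₁ : A x₁ y₁) (a₂ : A y₁ x₂) (a₃ : A x₂ y₂)
    (hx : x₁ ≠ x₂) (hy : y₁ ≠ y₂) (hv : v ∈ ({x₁, y₁, x₂, y₂} : Finset V)) :
    #(oppPart X v ∩ {x₁, y₁, x₂, y₂}) = 2 := by
  have s₁ := hB.mem_iff_not_mem_of_adj a₁
  have s₂ := hB.mem_iff_not_mem_of_adj a₂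
  have s₃ := hB.mem_iff_not_mem_of_adj a₃
  have hX : oppPart X x₁ ∩ {x₁, y₁, x₂, y₂} = {y₁, y₂} := by
    ext u
    simp only [mem_inter, mem_oppPart, mem_insert, mem_singleton]
    constructor
    · rintro ⟨h, h' | h' | h' | h'⟩ <;> rw [h'] at h ⊢ <;> tauto
    · rintro (h' | h') <;> rw [h'] <;> tauto
  have hY : oppPart X y₁ ∩ {x₁, y₁, x₂, y₂} = {x₁, x₂} := by
    ext u
    simp only [mem_inter, mem_oppPart, mem_insert, mem_singleton]
    constructor
    · rintro ⟨h, h' | h' | h' | h'⟩ <;> rw [h'] at h ⊢ <;> tauto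
    · rintro (h' | h') <;> rw [h'] <;> tauto
  have ox : oppPart X x₂ = oppPart X x₁ := by ext u; simp only [mem_oppPart]; tauto
  have oy : oppPart X y₂ = oppPart X y₁ := by ext u; simp only [mem_oppPart]; tauto
  simp only [mem_insert, mem_singleton] at hv
  rcases hv with h | h | h | h <;> rw [h]
  · rw [hX, card_pair hy]
  · rw [hY, card_pair hx]
  · rw [ox, hX, card_pair hy]
  · rw [oy, hY, card_pair hx]

end IsBalancedBipartite

end Bipartite

section Degrees

variable {A : V → V → Prop} {X D : Finset V} {a : ℕ} {F : Perm V} {u v w : V}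

def Heavy (A : V → V → Prop) (a : ℕ) (v : V) : Prop := 2 * a - 1 ≤ deg A v

def DomPairCond (A : V → V → Prop) (a : ℕ) : Prop :=
  ∀ x y : V, DomPair A x y →
    (2 * a - 1 ≤ deg A x ∧ a + 1 ≤ deg A y) ∨ (2 * a - 1 ≤ deg A y ∧ a + 1 ≤ deg A x)

theorem DomPairCond.heavy_or_heavy (hdom : DomPairCond A a) (hne : u ≠ v) (hu : A u w)
    (hv : A v w) : Heavy A a u ∨ Heavy A a v := by
  rcases hdom u v ⟨hne, w, hu, hv⟩ with h | h
  · exact .inl h.1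
  · exact .inr h.1

theorem DomPairCond.le_deg (hdom : DomPairCond A a) (ha : 2 ≤ a) (hne : u ≠ v) (hu : A u w)
    (hv : A v w) : a + 1 ≤ deg A u := by
  rcases hdom u v ⟨hne, w, hu, hv⟩ with h | h
  · have := h.1; omega
  · exact h.2

variable [Fintype V]

namespace DomPairCond

variable (hdom : DomPairCond A a)
include hdom

theorem le_deg_of_one_lt_card_inNbrs (ha : 2 ≤ a) (h : A u w) (hw : 1 < #(inNbrs A w)) :
    a + 1 ≤ deg A u := by
  obtain ⟨z, hz, hne⟩ := exists_mem_ne hw u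
  exact hdom.le_deg ha hne.symm h (mem_inNbrs.1 hz)

theorem card_filter_not_heavy_inNbrs_le_one : #((inNbrs A w).filter (¬Heavy A a ·)) ≤ 1 := by
  refine card_le_one.2 fun u hu v hv => by_contra fun hne => ?_
  simp only [mem_filter, mem_inNbrs] at hu hv
  exact (hdom.heavy_or_heavy hne hu.1 hv.1).elim hu.2 hv.2

end DomPairCond

namespace IsBalancedBipartite

variable (hB : IsBalancedBipartite A X a)
include hB

theorem card_sdiff_outNbrs_add_card_sdiff_inNbrs_le_one (hv : Heavy A a v) :
    #(oppPart X v \ outNbrs A v) + #(oppPart X v \ inNbrs A v) ≤ 1 := by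
  rw [card_sdiff_of_subset hB.outNbrs_subset, card_sdiff_of_subset hB.inNbrs_subset,
    hB.card_oppPart]
  have := deg_eq_card_add_card A v
  have := hB.card_outNbrs_le (v := v)
  have := hB.card_inNbrs_le (v := v)
  unfold Heavy at hv
  omega

theorem le_card_inNbrs_of_heavy (hv : Heavy A a v) : a - 1 ≤ #(inNbrs A v) := by
  have := deg_eq_card_add_card A v
  have := hB.card_outNbrs_le (v := v)
  unfold Heavy at hv
  omega

theorem adj_of_heavy_of_not_adj (hv : Heavy A a v) (hw : w ∈ oppPart X v) (hvw : ¬A v w)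
    (hu : u ∈ oppPart X v) : A u v := by
  by_contra huv
  have h1 : 0 < #(oppPart X v \ outNbrs A v) := card_pos.2 ⟨w, by simp [hw, hvw]⟩
  have h2 : 0 < #(oppPart X v \ inNbrs A v) := card_pos.2 ⟨u, by simp [hu, huv]⟩
  have := hB.card_sdiff_outNbrs_add_card_sdiff_inNbrs_le_one hv
  omega

theorem adj_of_heavy_of_not_adj_of_ne (hv : Heavy A a v) (hw : w ∈ oppPart X v) (hvw : ¬A v w)
    (hu : u ∈ oppPart X v) (huw : u ≠ w) : A v u := by
  by_contra hvu
  have : 1 < #(oppPart X v \ outNbrs A v) :=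
    one_lt_card.2 ⟨u, by simp [hu, hvu], w, by simp [hw, hvw], huw⟩
  have := hB.card_sdiff_outNbrs_add_card_sdiff_inNbrs_le_one hv
  omega

theorem two_mul_card_oppPart_sdiff_le_of_heavy (hv : Heavy A a v) (D : Finset V) :
    2 * #(oppPart X v \ D) ≤ #(outNbrs A v \ D) + #(inNbrs A v \ D) + 1 := by
  have key : ∀ N : Finset V, #(oppPart X v \ D) ≤ #(N \ D) + #(oppPart X v \ N) := fun N =>
    (card_le_card fun x hx => by by_cases x ∈ N <;> simp_all).trans (card_union_le _ _)
  have := key (outNbrs A v)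
  have := key (inNbrs A v)
  have := hB.card_sdiff_outNbrs_add_card_sdiff_inNbrs_le_one hv
  omega

theorem card_oppPart_sdiff_le_card_outNbrs_sdiff_add_one (hv : Heavy A a v) (D : Finset V) :
    #(oppPart X v \ D) ≤ #(outNbrs A v \ D) + 1 := by
  have := hB.two_mul_card_oppPart_sdiff_le_of_heavy hv D
  have := card_le_card (sdiff_subset_sdiff (hB.inNbrs_subset (v := v)) (le_refl D))
  omega

theorem card_oppPart_sdiff_le_card_inNbrs_sdiff_add_one (hv : Heavy A a v) (D : Finset V) :
    #(oppPart X v \ D) ≤ #(inNbrs A v \ D) + 1 := by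
  have := hB.two_mul_card_oppPart_sdiff_le_of_heavy hv D
  have := card_le_card (sdiff_subset_sdiff (hB.outNbrs_subset (v := v)) (le_refl D))
  omega

theorem card_filter_not_heavy_oppPart_le_two (hdom : DomPairCond A a) (hv : Heavy A a v) :
    #((oppPart X v).filter (¬Heavy A a ·)) ≤ 2 := by
  have hsub : (oppPart X v).filter (¬Heavy A a ·) ⊆
      (oppPart X v \ inNbrs A v) ∪ (inNbrs A v).filter (¬Heavy A a ·) := fun x hx => by
    by_cases x ∈ inNbrs A v <;> simp_all
  have := (card_le_card hsub).trans (card_union_le _ _)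
  have := hB.card_sdiff_outNbrs_add_card_sdiff_inNbrs_le_one hv
  have := hdom.card_filter_not_heavy_inNbrs_le_one (w := v)
  omega

theorem card_le_card_biUnion_outNbrs_of_subset (hdom : DomPairCond A a) (hS : StrongConn A)
    (ha : 1 ≤ a) {s : Finset V} (hs : s ⊆ X) : #s ≤ #(s.biUnion (outNbrs A)) := by
  by_cases h : ∃ x ∈ s, Heavy A a x
  · obtain ⟨x, hx, hxh⟩ := h
    have hout : a - 1 ≤ #(outNbrs A x) := by
      have := deg_eq_card_add_card A x
      have := hB.card_inNbrs_le (v := x)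
      unfold Heavy at hxh
      omega
    have hsx := card_le_card (subset_biUnion_of_mem (outNbrs A) hx)
    by_cases hsa : #s ≤ a - 1
    · omega
    have hsX : s = X := eq_of_subset_of_card_le hs (by rw [hB.card_eq]; omega)
    have hsub : Xᶜ ⊆ s.biUnion (outNbrs A) := fun y hy => by
      obtain ⟨z, hz⟩ := hB.inNbrs_nonempty hS ha y
      have := hB.mem_iff_not_mem_of_adj (mem_inNbrs.1 hz)
      rw [mem_compl] at hy
      exact mem_biUnion.2 ⟨z, hsX ▸ by tauto, by simpa using hz⟩
    have := card_le_card hsub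
    rw [hB.card_compl_eq] at this
    have := card_le_card hs
    rw [hB.card_eq] at this
    omega
  · push Not at h
    refine card_le_card_biUnion (fun x hx y hy hne => disjoint_left.2 fun z hzx hzy => ?_)
      fun x _ => hB.outNbrs_nonempty hS ha x
    exact (hdom.heavy_or_heavy hne (mem_outNbrs.1 hzx) (mem_outNbrs.1 hzy)).elim (h x hx) (h y hy)

theorem card_le_card_biUnion_outNbrs (hdom : DomPairCond A a) (hS : StrongConn A) (ha : 1 ≤ a)
    (s : Finset V) : #s ≤ #(s.biUnion (outNbrs A)) := by
  have h₁ := hB.card_le_card_biUnion_outNbrs_of_subset hdom hS ha (s := s.filter (· ∈ X))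
    (fun x hx => (mem_filter.1 hx).2)
  have h₂ := hB.compl.card_le_card_biUnion_outNbrs_of_subset hdom hS ha
    (s := s.filter (· ∉ X)) (fun x hx => mem_compl.2 (mem_filter.1 hx).2)
  have hdisj : Disjoint ((s.filter (· ∈ X)).biUnion (outNbrs A))
      ((s.filter (· ∉ X)).biUnion (outNbrs A)) := by
    simp only [disjoint_left, mem_biUnion, mem_filter, mem_outNbrs]
    rintro z ⟨x, ⟨-, hx⟩, hxz⟩ ⟨y, ⟨-, hy⟩, hyz⟩
    have := hB.mem_iff_not_mem_of_adj hxz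
    have := hB.mem_iff_not_mem_of_adj hyz
    tauto
  have := card_filter_add_card_filter_not (s := s) (p := (· ∈ X))
  have := card_le_card (union_subset
    (biUnion_subset_biUnion_of_subset_left (outNbrs A) (filter_subset (· ∈ X) s))
    (biUnion_subset_biUnion_of_subset_left (outNbrs A) (filter_subset (· ∉ X) s)))
  rw [card_union_of_disjoint hdisj] at this
  omega

theorem exists_perm_adj (hdom : DomPairCond A a) (hS : StrongConn A) (ha : 1 ≤ a) :
    ∃ F : Perm V, ∀ v, A v (F v) := by
  obtain ⟨f, hinj, hf⟩ := (all_card_le_biUnion_card_iff_exists_injective (outNbrs A)).1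
    (hB.card_le_card_biUnion_outNbrs hdom hS ha)
  exact ⟨.ofBijective f (Finite.injective_iff_bijective.1 hinj), fun v => mem_outNbrs.1 (hf v)⟩

variable (hF : ∀ v, A v (F v))
include hF

theorem mem_iff_apply_not_mem (v : V) : F v ∈ X ↔ v ∉ X := by
  have := hB.mem_iff_not_mem_of_adj (hF v); tauto

theorem mem_iff_symm_apply_not_mem (v : V) : F.symm v ∈ X ↔ v ∉ X := by
  have := hB.mem_iff_apply_not_mem hF (F.symm v); rw [apply_symm_apply] at this; tauto

theorem card_oppPart_apply_sdiff (hD : ∀ v, F v ∈ D ↔ v ∈ D) (w : V) :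
    #(oppPart X (F w) \ D) = #(oppPart X w \ D) := by
  have s := hB.mem_iff_apply_not_mem hF
  refine card_nbij' F F.symm (fun u hu => ?_) (fun u hu => ?_)
    (fun u _ => F.symm_apply_apply u) (fun u _ => F.apply_symm_apply u)
  · simp only [coe_sdiff, Set.mem_sdiff, mem_coe, mem_oppPart, hD, s] at hu ⊢
    tauto
  · have := s (F.symm u)
    simp only [coe_sdiff, Set.mem_sdiff, mem_coe, mem_oppPart, apply_symm_apply, s] at hu this ⊢
    refine ⟨by tauto, fun h => hu.2 ?_⟩
    simpa using (hD (F.symm u)).2 h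

theorem le_deg_symm_apply_of_heavy (hdom : DomPairCond A a) (ha : 3 ≤ a) (hw : Heavy A a w) :
    a + 1 ≤ deg A (F.symm w) :=
  hdom.le_deg_of_one_lt_card_inNbrs (by omega) (by simpa using hF (F.symm w))
    (by have := hB.le_card_inNbrs_of_heavy hw; omega)

theorem exists_heavy_and_heavy_apply (hdom : DomPairCond A a) (ha : 5 ≤ a) (hu : Heavy A a u) :
    ∃ v, Heavy A a v ∧ Heavy A a (F v) := by
  set H := (inNbrs A u).filter (Heavy A a)
  have hH : a - 2 ≤ #H := by
    have := hB.le_card_inNbrs_of_heavy hu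
    have := hdom.card_filter_not_heavy_inNbrs_le_one (w := u)
    have : #H + #((inNbrs A u).filter (¬Heavy A a ·)) = #(inNbrs A u) :=
      card_filter_add_card_filter_not _
    omega
  obtain ⟨g, hg⟩ : H.Nonempty := card_pos.1 (by omega)
  have hsub : H.image F ⊆ oppPart X g := fun x hx => by
    obtain ⟨h, hh, rfl⟩ := mem_image.1 hx
    have := hB.mem_iff_not_mem_of_adj (mem_inNbrs.1 (mem_filter.1 hh).1)
    have := hB.mem_iff_not_mem_of_adj (mem_inNbrs.1 (mem_filter.1 hg).1)
    simp only [mem_oppPart, hB.mem_iff_apply_not_mem hF]; tauto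
  obtain ⟨x, hx, hxl⟩ := exists_mem_notMem_of_card_lt_card
    (s := (oppPart X g).filter (¬Heavy A a ·)) (t := H.image F) (by
      have := hB.card_filter_not_heavy_oppPart_le_two hdom (mem_filter.1 hg).2
      rw [card_image_of_injective _ F.injective]; omega)
  obtain ⟨h, hh, rfl⟩ := mem_image.1 hx
  exact ⟨h, (mem_filter.1 hh).2, by simpa [hsub hx] using hxl⟩

theorem apply_four_eq_of_card_oppPart_sdiff_le_two (hD : ∀ v, F v ∈ D ↔ v ∈ D) {x : V}
    (h2 : #(oppPart X x \ D) ≤ 2) (hw : w ∉ D) : F (F (F (F w))) = w := by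
  have s := hB.mem_iff_apply_not_mem hF
  have key : ∀ u ∉ D, u ∈ oppPart X x → F (F (F (F u))) = u := by
    intro u hu hux
    by_contra h4
    have h2u : F (F u) ≠ u := fun h => h4 (by rw [h, h])
    have hmem : ({u, F (F u), F (F (F (F u)))} : Finset V) ⊆ oppPart X x \ D := by
      intro k hk
      simp only [mem_insert, mem_singleton] at hk
      rw [mem_oppPart] at hux
      rcases hk with rfl | rfl | rfl <;> simp only [mem_sdiff, mem_oppPart, hD, s] <;> tauto
    have h3 : #({u, F (F u), F (F (F (F u)))} : Finset V) = 3 :=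
      card_eq_three.2 ⟨_, _, _, Ne.symm h2u, Ne.symm h4,
        fun h => h2u (F.injective (F.injective h.symm)), rfl⟩
    exact absurd (card_le_card hmem) (by omega)
  by_cases hwx : w ∈ oppPart X x
  · exact key w hw hwx
  · refine F.injective (key (F w) (by rwa [hD]) ?_)
    simp only [mem_oppPart, s] at hwx ⊢; tauto

end IsBalancedBipartite

end Degrees

section StuckFactor

variable [Fintype V] {A : V → V → Prop} {X D : Finset V} {a : ℕ} {F : Perm V} {u v w z : V}

/-- A cycle factor `v ↦ F v` of `A` admitting no exchange `u ↦ F w`, `w ↦ F u` between two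
different cycles (the exchange `F * swap u w` would merge them). -/
structure IsStuckFactor (A : V → V → Prop) (F : Perm V) : Prop where
  adj_apply : ∀ v, A v (F v)
  sameCycle_of_adj : ∀ {u w}, A u (F w) → A w (F u) → F.SameCycle u w

theorem exists_isStuckFactor (h : ∃ F : Perm V, ∀ v, A v (F v)) : ∃ F, IsStuckFactor A F := by
  obtain ⟨F, hF, hmax⟩ := exists_max_image ({F | ∀ v, A v (F v)} : Finset (Perm V))
    (fun F => #F.sameCyclePairs) (by obtain ⟨F, hF⟩ := h; exact ⟨F, by simpa using hF⟩)
  simp only [mem_filter, mem_univ, true_and] at hF hmax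
  refine ⟨F, hF, fun {u w} huw hwu => by_contra fun hns => ?_⟩
  refine (hmax (F * swap u w) fun v => ?_).not_gt (card_sameCyclePairs_lt_mul_swap hns)
  by_cases hvu : v = u
  · subst hvu; simpa using huw
  by_cases hvw : v = w
  · subst hvw; simpa using hwu
  simpa [swap_apply_of_ne_of_ne hvu hvw] using hF v

namespace IsStuckFactor

variable (hF : IsStuckFactor A F) (hB : IsBalancedBipartite A X a)
include hF hB

/- The `u ∉ D` with `u → F w` and those with `w → F u` are disjoint sets, for `u` in both would
allow an exchange with `w`. -/
theorem card_inNbrs_apply_sdiff_add_card_outNbrs_sdiff_le (hD : ∀ v, F v ∈ D ↔ v ∈ D)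
    (hw : w ∈ D) : #(inNbrs A (F w) \ D) + #(outNbrs A w \ D) ≤ #(oppPart X w \ D) := by
  have s := hB.mem_iff_apply_not_mem hF.adj_apply
  rw [← card_image_of_injective _ F.injective, ← card_union_of_disjoint]
  · refine card_le_card (union_subset (fun x hx => ?_)
      (sdiff_subset_sdiff hB.outNbrs_subset le_rfl))
    obtain ⟨u, hu, rfl⟩ := mem_image.1 hx
    simp only [mem_sdiff, mem_inNbrs] at hu
    have := hB.mem_iff_not_mem_of_adj hu.1
    simp only [mem_sdiff, mem_oppPart, s, hD] at this ⊢
    tauto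
  · refine disjoint_left.2 fun x hx hx' => ?_
    obtain ⟨u, hu, rfl⟩ := mem_image.1 hx
    simp only [mem_sdiff, mem_inNbrs, mem_outNbrs] at hu hx'
    exact hu.2 ((hF.sameCycle_of_adj hu.1 hx'.1).symm.mem_of_apply_mem_iff hD hw)

theorem card_inNbrs_apply_sdiff_add_card_outNbrs_symm_sdiff_le_one (hD : ∀ v, F v ∈ D ↔ v ∈ D)
    (hw : w ∈ D) (hheavy : Heavy A a w) :
    #(inNbrs A (F w) \ D) + #(outNbrs A (F.symm w) \ D) ≤ 1 := by
  have h1 := hF.card_inNbrs_apply_sdiff_add_card_outNbrs_sdiff_le hB hD hw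
  have h2 := hF.card_inNbrs_apply_sdiff_add_card_outNbrs_sdiff_le hB hD (w := F.symm w)
    ((hD _).1 (by simpa using hw))
  rw [← hB.card_oppPart_apply_sdiff hF.adj_apply hD, apply_symm_apply] at h2
  have := hB.two_mul_card_oppPart_sdiff_le_of_heavy hheavy D
  omega

theorem card_oppPart_apply_sdiff_le_two (hD : ∀ v, F v ∈ D ↔ v ∈ D) (hv : v ∈ D)
    (hh : Heavy A a v) (hh' : Heavy A a (F v)) : #(oppPart X (F v) \ D) ≤ 2 := by
  have := hF.card_inNbrs_apply_sdiff_add_card_outNbrs_sdiff_le hB hD hv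
  have := hB.card_oppPart_sdiff_le_card_outNbrs_sdiff_add_one hh D
  have := hB.card_oppPart_sdiff_le_card_inNbrs_sdiff_add_one hh' D
  omega

theorem not_heavy_apply_and_symm_apply (hD : ∀ v, F v ∈ D ↔ v ∈ D) (hw : w ∈ D)
    (hheavy : Heavy A a w) (h3 : 3 ≤ #(oppPart X w \ D)) :
    ¬Heavy A a (F w) ∧ ¬Heavy A a (F.symm w) := by
  have key := hF.card_inNbrs_apply_sdiff_add_card_outNbrs_symm_sdiff_le_one hB hD hw hheavy
  have h₁ := hB.card_oppPart_apply_sdiff hF.adj_apply hD w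
  have h₂ := hB.card_oppPart_apply_sdiff hF.adj_apply hD (F.symm w)
  rw [apply_symm_apply] at h₂
  constructor <;> intro h
  · have := hB.card_oppPart_sdiff_le_card_inNbrs_sdiff_add_one h D; omega
  · have := hB.card_oppPart_sdiff_le_card_outNbrs_sdiff_add_one h D; omega

theorem not_heavy_of_two_cycle (hdom : DomPairCond A a) (ha : 3 ≤ a) {x y : V}
    (h₁ : F x = y) (h₂ : F y = x) : ¬Heavy A a x := fun hx => by
  have hD : ∀ v, F v ∈ ({x, y} : Finset V) ↔ v ∈ ({x, y} : Finset V) := by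
    simpa [h₁, h₂] using apply_mem_iff_of_apply_four (F := F) (w := x) (by rw [h₁, h₂, h₁, h₂])
  have key := hF.card_inNbrs_apply_sdiff_add_card_outNbrs_symm_sdiff_le_one hB hD (by simp) hx
  have hdeg := hB.le_deg_symm_apply_of_heavy hF.adj_apply hdom ha hx
  rw [F.symm_apply_eq.2 h₂.symm] at key hdeg
  rw [h₁] at key
  have hloop := hB.not_adj_self y
  have hin : #(inNbrs A y) ≤ #(inNbrs A y \ {x, y}) + #{x} :=
    card_le_card_sdiff_add_card_of_inter_subset fun u hu => by aesop
  have hout : #(outNbrs A y) ≤ #(outNbrs A y \ {x, y}) + #{x} :=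
    card_le_card_sdiff_add_card_of_inter_subset fun u hu => by aesop
  rw [deg_eq_card_add_card] at hdeg
  rw [card_singleton] at hin hout
  omega

/- The degree condition is pushed backwards along the cycle, `y₂ → x₂ → y₁`, each step bounding
the arcs leaving `D`, until `y₁` has degree at most `5 < a + 1`. -/
theorem not_heavy_of_four_cycle (hdom : DomPairCond A a) (ha : 5 ≤ a) {x₁ y₁ x₂ y₂ : V}
    (h₁ : F x₁ = y₁) (h₂ : F y₁ = x₂) (h₃ : F x₂ = y₂) (h₄ : F y₂ = x₁) (hy : y₁ ≠ y₂) :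
    ¬Heavy A a x₁ := fun hx₁ => by
  set D : Finset V := {x₁, y₁, x₂, y₂}
  have hD : ∀ v, F v ∈ D ↔ v ∈ D := by
    simpa [D, h₁, h₂, h₃] using
      apply_mem_iff_of_apply_four (F := F) (w := x₁) (by rw [h₁, h₂, h₃, h₄])
  have a₁ : A x₁ y₁ := h₁ ▸ hF.adj_apply x₁
  have a₂ : A y₁ x₂ := h₂ ▸ hF.adj_apply y₁
  have a₃ : A x₂ y₂ := h₃ ▸ hF.adj_apply x₂
  have hD₂ : ∀ v ∈ D, #(oppPart X v ∩ D) = 2 :=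
    fun v => hB.card_oppPart_inter_eq_two a₁ a₂ a₃ (fun h => hy (by rw [← h₁, h, h₃])) hy
  have hm : ∀ v ∈ D, #(oppPart X v \ D) = a - 2 := fun v hv => by
    have := card_sdiff_add_card_inter (oppPart X v) D
    rw [hD₂ v hv, hB.card_oppPart] at this
    omega
  have hext : ∀ v ∈ D, ∀ s ⊆ oppPart X v, #s ≤ #(s \ D) + 2 := fun v hv s hs =>
    hD₂ v hv ▸ card_le_card_sdiff_add_card_of_inter_subset (inter_subset_inter_right hs)
  have hsymm : F.symm x₁ = y₂ := F.symm_apply_eq.2 h₄.symm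
  obtain ⟨hl₁, hl₂⟩ := hF.not_heavy_apply_and_symm_apply hB hD (by simp [D]) hx₁
    (by rw [hm x₁ (by simp [D])]; omega)
  rw [h₁] at hl₁
  rw [hsymm] at hl₂
  have hn : ¬A y₂ x₂ := fun h => (hdom.heavy_or_heavy hy.symm h a₂).elim hl₂ hl₁
  have k₀ := hF.card_inNbrs_apply_sdiff_add_card_outNbrs_symm_sdiff_le_one hB hD (by simp [D]) hx₁
  have k₁ := hF.card_inNbrs_apply_sdiff_add_card_outNbrs_sdiff_le hB hD (w := x₂) (by simp [D])
  have k₂ := hF.card_inNbrs_apply_sdiff_add_card_outNbrs_sdiff_le hB hD (w := y₁) (by simp [D])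
  have dy₂ := hB.le_deg_symm_apply_of_heavy hF.adj_apply hdom (by omega) hx₁
  rw [h₁, hsymm] at k₀
  rw [hsymm, deg_eq_card_add_card] at dy₂
  rw [h₃, hm x₂ (by simp [D])] at k₁
  rw [h₂, hm y₁ (by simp [D])] at k₂
  have o₂ := card_le_card_sdiff_add_card_inter_sub_one (D := D) hB.outNbrs_subset
    (mem_inter.2 ⟨hB.mem_oppPart_of_adj' a₃, by simp [D]⟩) (fun h => hn (mem_outNbrs.1 h))
  have i₃ := card_le_card_sdiff_add_card_inter_sub_one (D := D) hB.inNbrs_subset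
    (mem_inter.2 ⟨hB.mem_oppPart_of_adj a₃, by simp [D]⟩) (fun h => hn (mem_inNbrs.1 h))
  rw [hD₂ y₂ (by simp [D])] at o₂
  rw [hD₂ x₂ (by simp [D])] at i₃
  have i₂ := hext y₂ (by simp [D]) _ hB.inNbrs_subset
  have o₃ := hext x₂ (by simp [D]) _ hB.outNbrs_subset
  have i₁ := hext y₁ (by simp [D]) _ hB.inNbrs_subset
  have o₁ := hext y₁ (by simp [D]) _ hB.outNbrs_subset
  have dx₂ := hdom.le_deg_of_one_lt_card_inNbrs (by omega) a₃ (by omega)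
  rw [deg_eq_card_add_card] at dx₂
  have dy₁ := hdom.le_deg_of_one_lt_card_inNbrs (by omega) a₂ (by omega)
  rw [deg_eq_card_add_card] at dy₁
  omega

theorem heavy_of_adj_apply_of_not_heavy (hdom : DomPairCond A a) {p : V} (hp : ¬Heavy A a p)
    (hp' : ¬Heavy A a (F.symm p)) (hpv : ¬F.SameCycle p v) (hv : A p (F v)) :
    Heavy A a v ∧ ¬A v (F p) ∧ Heavy A a (F.symm v) ∧ ¬A (F.symm v) p := by
  have hvp : v ≠ p := fun h => hpv (h ▸ .refl _ _)
  have hv₁ : ¬A v (F p) := fun h => hpv (hF.sameCycle_of_adj hv h)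
  have hvh := (hdom.heavy_or_heavy hvp (hF.adj_apply v) hv).resolve_right hp
  have sv := hB.mem_iff_not_mem_of_adj hv
  simp only [hB.mem_iff_apply_not_mem hF.adj_apply] at sv
  have hAv : A (F.symm p) v := hB.adj_of_heavy_of_not_adj hvh
    (by simp only [mem_oppPart, hB.mem_iff_apply_not_mem hF.adj_apply]; tauto) hv₁
    (by simp only [mem_oppPart, hB.mem_iff_symm_apply_not_mem hF.adj_apply]; tauto)
  have hv₂ : ¬A (F.symm v) p := fun h => hpv <| by
    simpa using hF.sameCycle_of_adj (u := F.symm p) (w := F.symm v) (by simpa using hAv)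
      (by simpa using h)
  have hne : F.symm v ≠ F.symm p := fun h => hvp (F.symm.injective h)
  refine ⟨hvh, hv₁, ?_, hv₂⟩
  exact (hdom.heavy_or_heavy hne (by simpa using hF.adj_apply (F.symm v)) hAv).resolve_right hp'

theorem sameCycle_of_adj_of_not_heavy (hdom : DomPairCond A a) {p t : V} (hp : ¬Heavy A a p)
    (hp' : ¬Heavy A a (F.symm p)) (hz : z ≠ p) (hzp : A z (F p)) (ht : A p t) :
    F.SameCycle p t := by
  by_contra hpt
  have s := hB.mem_iff_apply_not_mem hF.adj_apply
  have s' := hB.mem_iff_symm_apply_not_mem hF.adj_apply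
  have sz := hB.mem_iff_not_mem_of_adj hzp
  have st := hB.mem_iff_not_mem_of_adj ht
  simp only [s] at sz
  have step := fun v => hF.heavy_of_adj_apply_of_not_heavy hB hdom (v := v) hp hp'
  -- `T` is closed under `F⁻¹`, hence a union of cycles; an exchange below puts `z` into it.
  let T : V → Prop := fun v => ¬F.SameCycle p v ∧ (A p v ∨ A p (F v))
  have hT : ∀ v, T v → T (F.symm v) := by
    rintro v ⟨hpv, hv | hv⟩
    · exact ⟨by rwa [sameCycle_symm_apply_right], .inr (by simpa using hv)⟩
    · obtain ⟨-, -, hh, hn⟩ := step v hpv hv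
      have sv := hB.mem_iff_not_mem_of_adj hv
      simp only [s] at sv
      refine ⟨by rwa [sameCycle_symm_apply_right], .inl (hB.adj_of_heavy_of_not_adj hh ?_ hn ?_)⟩
      all_goals simp only [mem_oppPart, s']; tauto
  obtain ⟨-, -, hr, hrp⟩ := step (F.symm t) (by rwa [sameCycle_symm_apply_right])
    (by simpa using ht)
  set r := F.symm (F.symm t)
  have sr : r ∈ X ↔ t ∈ X := by simp only [r, s']; tauto
  have hpr : A p r := hB.adj_of_heavy_of_not_adj hr (by simp only [mem_oppPart]; tauto) hrp
    (by simp only [mem_oppPart]; tauto)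
  have hzr : A z r := hB.adj_of_heavy_of_not_adj hr (by simp only [mem_oppPart]; tauto) hrp
    (by simp only [mem_oppPart]; tauto)
  have hpg : ¬F.SameCycle p (F.symm r) := by
    rwa [sameCycle_symm_apply_right, sameCycle_symm_apply_right, sameCycle_symm_apply_right]
  obtain ⟨hg, hgp, -, -⟩ := step (F.symm r) hpg (by simpa using hpr)
  have hgz : A (F.symm r) (F z) := hB.adj_of_heavy_of_not_adj_of_ne hg
    (by simp only [mem_oppPart, s, s']; tauto) hgp
    (by simp only [mem_oppPart, s, s']; tauto) (fun h => hz (F.injective h))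
  obtain ⟨hpz, hz' | hz'⟩ :=
    (hF.sameCycle_of_adj (by simpa using hzr) hgz).symm.of_forall_symm_apply hT
      ⟨hpg, .inr (by simpa using hpr)⟩
  · exact (hB.not_adj_of_adj_of_adj hz' hzp).1 (hF.adj_apply p)
  · exact hpz (hF.sameCycle_of_adj hz' hzp)

theorem sameCycle_of_forall_not_heavy (hdom : DomPairCond A a) (hS : StrongConn A) (ha : 2 ≤ a)
    (hu : ∀ w, F.SameCycle u w → ¬Heavy A a w) (v : V) : F.SameCycle u v := by
  by_contra huv
  let P : V → Prop := fun q => ∃ z ≠ q, A z (F q)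
  have prop : ∀ q, F.SameCycle u q → P q →
      (∀ t, A q t → F.SameCycle q t) ∧ P (F.symm q) := by
    rintro q huq ⟨z, hzq, hz⟩
    have hq : ∀ t, A q t → F.SameCycle q t := fun t => hF.sameCycle_of_adj_of_not_heavy hB hdom
      (hu q huq) (hu _ (by rwa [sameCycle_symm_apply_right])) hzq hz
    refine ⟨hq, ?_⟩
    have hdeg := hdom.le_deg ha (Ne.symm hzq) (hF.adj_apply q) hz
    obtain ⟨o, ho, hqo⟩ : ∃ o ∈ oppPart X q, ¬F.SameCycle q o := by
      have hqv : ¬F.SameCycle q v := fun h => huv (huq.trans h)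
      by_cases hv : v ∈ oppPart X q
      · exact ⟨v, hv, hqv⟩
      · refine ⟨F v, ?_, by rwa [sameCycle_apply_right]⟩
        simp only [mem_oppPart, hB.mem_iff_apply_not_mem hF.adj_apply] at hv ⊢; tauto
    have hout : #(outNbrs A q) ≤ a - 1 := by
      rw [← hB.card_oppPart q, ← card_erase_of_mem ho]
      exact card_le_card fun t ht => mem_erase.2
        ⟨fun h => hqo (h ▸ hq t (mem_outNbrs.1 ht)), hB.outNbrs_subset ht⟩
    rw [deg_eq_card_add_card] at hdeg
    obtain ⟨z', hz', hne⟩ := exists_mem_ne (s := inNbrs A q) (by omega) (F.symm q)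
    exact ⟨z', hne, by simpa using mem_inNbrs.1 hz'⟩
  obtain ⟨x, y, hx, hy, hxy⟩ :=
    hS.exists_adj (S := fun x => ¬F.SameCycle u x) huv (not_not.2 (.refl _ _))
  rw [not_not] at hy
  have hQ : ∀ q, F.SameCycle (F.symm y) q → F.SameCycle u q ∧ P q := fun q hq =>
    hq.of_forall_symm_apply (S := fun q => F.SameCycle u q ∧ P q)
      (fun q h => ⟨by rw [sameCycle_symm_apply_right]; exact h.1, (prop q h.1 h.2).2⟩)
      ⟨by rwa [sameCycle_symm_apply_right], x,
        fun h => hx (h ▸ by rwa [sameCycle_symm_apply_right]), by simpa using hxy⟩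
  obtain ⟨x', y', hx', hy', hxy'⟩ := hS.exists_adj (S := fun x => F.SameCycle u x) (.refl _ _) huv
  obtain ⟨-, hPx'⟩ := hQ x' ((sameCycle_symm_apply_left.2 hy.symm).trans hx')
  exact hy' (hx'.trans ((prop x' hx' hPx').1 y' hxy'))

theorem sameCycle (hdom : DomPairCond A a) (hS : StrongConn A) (ha : 5 ≤ a) (u v : V) :
    F.SameCycle u v := by
  by_contra huv
  obtain ⟨w₀, -, hw₀⟩ : ∃ w, F.SameCycle u w ∧ Heavy A a w := by
    by_contra! h
    exact huv (hF.sameCycle_of_forall_not_heavy hB hdom hS (by omega) h v)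
  obtain ⟨x, hx, hFx⟩ := hB.exists_heavy_and_heavy_apply hF.adj_apply hdom ha hw₀
  set D : Finset V := {y | F.SameCycle x y}
  have hD : ∀ v, F v ∈ D ↔ v ∈ D := by simp [D]
  have h2 := hF.card_oppPart_apply_sdiff_le_two hB hD (by simp [D, SameCycle.refl]) hx hFx
  obtain ⟨y, hy⟩ : ∃ y, ¬F.SameCycle x y := by
    by_contra! h
    exact huv ((h u).symm.trans (h v))
  obtain ⟨w, hyw, hw⟩ : ∃ w, F.SameCycle y w ∧ Heavy A a w := by
    by_contra! h
    exact hy (hF.sameCycle_of_forall_not_heavy hB hdom hS (by omega) h x).symm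
  have h4 := hB.apply_four_eq_of_card_oppPart_sdiff_le_two hF.adj_apply hD h2 (w := w)
    (by simpa [D] using fun h => hy (h.trans hyw.symm))
  by_cases h2w : F (F w) = w
  · exact hF.not_heavy_of_two_cycle hB hdom (by omega) rfl h2w hw
  · exact hF.not_heavy_of_four_cycle hB hdom ha rfl rfl rfl h4
      (fun h => h2w (F.injective h).symm) hw

end IsStuckFactor

end StuckFactor

/-- Wang's theorem (Corollary 5.1): a strongly connected balanced bipartite digraph of
order `2a`, `a ≥ 5`, is hamiltonian provided that for every dominating pair `{x, y}`
either `d(x) ≥ 2a − 1` and `d(y) ≥ a + 1`, or `d(y) ≥ 2a − 1` and `d(x) ≥ a + 1`. -/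
theorem stmt7 [Fintype V] (A : V → V → Prop) (X Y : Set V) (a : ℕ) (ha : 5 ≤ a)
    (hX : X.ncard = a) (hY : Y.ncard = a) (hbip : IsBipartition A X Y)
    (hstrong : StrongConn A)
    (hdeg : ∀ x y : V, DomPair A x y →
      (2 * a - 1 ≤ deg A x ∧ a + 1 ≤ deg A y) ∨
      (2 * a - 1 ≤ deg A y ∧ a + 1 ≤ deg A x)) :
    Hamiltonian A := by
  have hB := hbip.isBalancedBipartite hX hY
  obtain ⟨F, hF⟩ := exists_isStuckFactor (hB.exists_perm_adj hdeg hstrong (by omega))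
  obtain ⟨v₀, -⟩ := card_pos.1 (hB.card_eq ▸ (by omega : 0 < a))
  exact hamiltonian_of_forall_sameCycle hF.adj_apply
    (fun v h => hB.not_adj_self v (by simpa [h] using hF.adj_apply v))
    (hF.sameCycle hB hdeg hstrong ha) v₀
end

section
/- The digraph H(6) is strongly connected and satisfies max{d(x), d(y)} ≥ 4 for every dominating pair of vertices {x, y}, but contains no perfect matching from X to Y; in particular H(6) is not hamiltonian. (Hence the bound 2a ≥ 8 in the perfect-matching lemma is sharp.) -/
/-! Both `x` and `y` have `u` as their only out-neighbour, so no perfect matching from `X` to `Y`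
exists; the successor map of a hamiltonian cycle would be one, since every arc leaving `X` ends
in `Y`. The only vertices of degree less than 4 are `y` and `w`, whose out-neighbours `u` and `x`
differ. Every vertex reaches `x` and is reached from it along `x → u → z → v → y`, `z → w`. -/

open Finset

variable {V : Type*}

/-- The arcs of the digraph `H(6)`; vertices `0,1,2` are `x,y,z` and `3,4,5` are `u,v,w`. -/
def H6Arcs : List (Fin 6 × Fin 6) :=
  [(0,3), (1,3),
   (3,0), (4,0), (5,0),
   (4,1), (4,2),
   (2,4), (2,5),
   (3,2)]

/-- The digraph `H(6)` of Example 3. -/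
def H6 (u v : Fin 6) : Prop := (u, v) ∈ H6Arcs

instance : DecidableRel H6 := fun u v => inferInstanceAs (Decidable ((u, v) ∈ H6Arcs))

lemma deg_eq_card_filter [Fintype V] (A : V → V → Prop) [DecidableRel A] (x : V) :
    deg A x = #{y | A x y} + #{y | A y x} := by
  simp only [deg, ← Set.ncard_coe_finset, coe_filter, mem_univ, true_and]

lemma StrongConn.of_reach (A : V → V → Prop) (r : V) (hto : ∀ v, Relation.ReflTransGen A v r)
    (hfrom : ∀ v, Relation.ReflTransGen A r v) : StrongConn A :=
  fun u v => (hto u).trans (hfrom v)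

lemma not_perfectMatchingFromTo_of_forall_eq (A : V → V → Prop) (X Y : Set V) {x₁ x₂ w : V}
    (hx₁ : x₁ ∈ X) (hx₂ : x₂ ∈ X) (hne : x₁ ≠ x₂) (h₁ : ∀ y, A x₁ y → y = w)
    (h₂ : ∀ y, A x₂ y → y = w) : ¬ PerfectMatchingFromTo A X Y := by
  rintro ⟨f, hinj, hf⟩
  exact hne (hinj hx₁ hx₂ ((h₁ _ (hf x₁ hx₁).1).trans (h₂ _ (hf x₂ hx₂).1).symm))

lemma Hamiltonian.perfectMatchingFromTo [Fintype V] {A : V → V → Prop} {X Y : Set V}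
    (hXY : ∀ x ∈ X, ∀ y, A x y → y ∈ Y) (h : Hamiltonian A) : PerfectMatchingFromTo A X Y := by
  obtain ⟨f, hbij, harc⟩ := h
  let e := Equiv.ofBijective f hbij
  refine ⟨fun v => f (e.symm v + 1), fun a _ b _ hab => ?_, fun x hx => ?_⟩
  · simpa using add_right_cancel (hbij.1 hab)
  · have hx' : A x (f (e.symm x + 1)) := by
      simpa only [e, Equiv.ofBijective_apply_symm_apply] using harc (e.symm x)
    exact ⟨hx', hXY x hx _ hx'⟩

lemma H6_strongConn : StrongConn H6 := by
  refine StrongConn.of_reach H6 0 (fun v => ?_) (fun v => ?_)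
  · fin_cases v
    exacts [.refl, .head (b := 3) (by decide) (.single (by decide)),
      .head (b := 4) (by decide) (.single (by decide)), .single (by decide),
      .single (by decide), .single (by decide)]
  · have h02 : Relation.ReflTransGen H6 0 2 := .head (b := 3) (by decide) (.single (by decide))
    have h04 : Relation.ReflTransGen H6 0 4 := .tail h02 (by decide)
    fin_cases v
    exacts [.refl, .tail h04 (by decide), h02, .single (by decide), h04, .tail h02 (by decide)]

lemma H6_not_perfectMatchingFromTo :
    ¬ PerfectMatchingFromTo H6 {u : Fin 6 | (u : ℕ) < 3} {u : Fin 6 | 3 ≤ (u : ℕ)} :=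
  not_perfectMatchingFromTo_of_forall_eq H6 _ _ (x₁ := 0) (x₂ := 1) (w := 3)
    (by decide) (by decide) (by decide) (by decide) (by decide)

/-- The digraph `H(6)` is strongly connected and satisfies `max {d(x), d(y)} ≥ 4` for
every dominating pair, but has no perfect matching from `X` to `Y`; in particular it is
not hamiltonian. -/
theorem stmt10 :
    StrongConn H6 ∧
    (∀ x y : Fin 6, DomPair H6 x y → 4 ≤ max (deg H6 x) (deg H6 y)) ∧
    ¬ PerfectMatchingFromTo H6 {u : Fin 6 | (u : ℕ) < 3} {u : Fin 6 | 3 ≤ (u : ℕ)} ∧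
    ¬ Hamiltonian H6 := by
  refine ⟨H6_strongConn, ?_, H6_not_perfectMatchingFromTo, fun h => ?_⟩
  · simp only [deg_eq_card_filter, DomPair]
    decide
  · exact H6_not_perfectMatchingFromTo (h.perfectMatchingFromTo (by decide))
end
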